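/- arXiv:1909.06060 — 5 statements merged into one kernel-verified Lean document; each statement's English description precedes it below -/
import Mathlib

section
/- For all natural numbers m and positive integers k, Ĉh_m^{(k)} = ∑_{n=max(0,m-k)}^{m} C(m,n) · (k!/(k+n-m)!) · Ch_n^{(k)}, relating the order-k Changhee numbers of the second kind to those of the first kind. -/
open Finset

/-- Higher-order Changhee numbers of the first kind. -/
def Ch (k n : ℕ) : ℚ := (-1)^n * n.factorial / 2^n * ((k + n - 1).choose n)

/-- Higher-order Changhee numbers of the second kind. -/
def Chh (k n : ℕ) : ℚ :=
  (n.factorial : ℚ) *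
    ∑ i ∈ range (n + 1), ((-1 : ℚ))^i / 2^i * ((k + i - 1).choose i) * (k.choose (n - i))

theorem second_kind_from_first_kind_general (m k : ℕ) :
    Chh k m = ∑ n ∈ range (m + 1),
      (m.choose n : ℚ) * ((m - n).factorial : ℚ) * (k.choose (m - n) : ℚ) * Ch k n := by
  rw [Chh, mul_sum]
  refine sum_congr rfl fun n hn => ?_
  have hfactorial : (m.factorial : ℚ) = m.choose n * n.factorial * (m - n).factorial := by
    exact_mod_cast (Nat.choose_mul_factorial_mul_factorial (mem_range_succ_iff.mp hn)).symm
  rw [Ch, hfactorial]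
  ring

theorem second_kind_from_first_kind (m k : ℕ) (hk : 1 ≤ k) :
    Chh k m = ∑ n ∈ range (m + 1),
      (m.choose n : ℚ) * ((m - n).factorial : ℚ) * (k.choose (m - n) : ℚ) * Ch k n :=
  second_kind_from_first_kind_general m k
end

section
/- For all natural numbers m and positive integers k, Ch_m^{(k)} = ∑_{n=0}^{m} (-1)^{m-n} · C(m,n) · ((k+m-n-1)!/(k-1)!) · Ĉh_n^{(k)}, recovering the first-kind higher-order Changhee numbers from the second-kind ones. -/
open Finset PowerSeries

lemma coeff_one_add_X_pow' (k n : ℕ) :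
    (PowerSeries.coeff (R := ℚ) n) ((1 + PowerSeries.X) ^ k) = (k.choose n : ℚ) := by
  have h : ((1 + PowerSeries.X : PowerSeries ℚ)) ^ k
      = (((1 + Polynomial.X : Polynomial ℚ) ^ k : Polynomial ℚ) : PowerSeries ℚ) := by
    simp [Polynomial.coe_pow, Polynomial.coe_add, Polynomial.coe_one, Polynomial.coe_X]
  rw [h, Polynomial.coeff_coe, Polynomial.coeff_one_add_X_pow]

lemma coeff_one_sub_X_pow (k n : ℕ) :
    (PowerSeries.coeff (R := ℚ) n) ((1 - PowerSeries.X) ^ k) = (-1 : ℚ)^n * (k.choose n : ℚ) := by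
  have h : ((1 - PowerSeries.X : PowerSeries ℚ)) ^ k
      = rescale (-1 : ℚ) ((1 + PowerSeries.X) ^ k) := by
    rw [map_pow, map_add, map_one, rescale_X]
    congr 1
    ext j
    simp [PowerSeries.coeff_C_mul, sub_eq_add_neg]
  rw [h, coeff_rescale, coeff_one_add_X_pow']

lemma key (k : ℕ) (hk : 0 < k) (M : ℕ) :
    ∑ j ∈ range (M + 1), ((k - 1 + j).choose (k - 1) : ℚ) * ((-1 : ℚ)^(M - j) * (k.choose (M - j) : ℚ))
      = if M = 0 then 1 else 0 := by
  have h := congrArg (PowerSeries.coeff (R := ℚ) M) ((invOneSubPow ℚ k).val_inv)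
  rw [invOneSubPow_inv_eq_one_sub_pow, PowerSeries.coeff_mul,
    Finset.Nat.sum_antidiagonal_eq_sum_range_succ_mk,
    invOneSubPow_val_eq_mk_sub_one_add_choose_of_pos ℚ k hk] at h
  simpa [coeff_one_sub_X_pow, PowerSeries.coeff_one, PowerSeries.coeff_mk, mul_assoc] using h

lemma key2 (k : ℕ) (hk : 0 < k) (M : ℕ) :
    ∑ j ∈ range (M + 1),
      (-1 : ℚ)^(M - j) * ((k + (M - j) - 1).choose (M - j) : ℚ) * (k.choose j : ℚ)
      = if M = 0 then 1 else 0 := by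
  have h := key k hk M
  have hrefl := Finset.sum_range_reflect
    (fun j => ((k - 1 + j).choose (k - 1) : ℚ) * ((-1 : ℚ)^(M - j) * (k.choose (M - j) : ℚ)))
    (M + 1)
  rw [← hrefl] at h
  have main : ∑ j ∈ range (M + 1),
      (-1 : ℚ)^(M - j) * ((k + (M - j) - 1).choose (M - j) : ℚ) * (k.choose j : ℚ)
      = (-1 : ℚ)^M * ∑ j ∈ range (M + 1),
        ((k - 1 + (M + 1 - 1 - j)).choose (k - 1) : ℚ) *
          ((-1 : ℚ)^(M - (M + 1 - 1 - j)) * (k.choose (M - (M + 1 - 1 - j)) : ℚ)) := by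
    rw [Finset.mul_sum]
    refine Finset.sum_congr rfl fun j hj => ?_
    rw [Finset.mem_range] at hj
    have e1 : M + 1 - 1 - j = M - j := by omega
    have e2 : M - (M - j) = j := by omega
    have e3 : k + (M - j) - 1 = k - 1 + (M - j) := by omega
    have e4 : ((k - 1 + (M - j)).choose (M - j) : ℚ) = ((k - 1 + (M - j)).choose (k - 1) : ℚ) := by
      congr 1
      have := Nat.choose_symm (show M - j ≤ k - 1 + (M - j) by omega)
      simpa using this.symm
    have e5 : (-1 : ℚ)^(M - j) = (-1 : ℚ)^M * (-1 : ℚ)^j := by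
      have h6 : M - j + j = M := by omega
      calc (-1 : ℚ)^(M - j) = (-1 : ℚ)^(M - j) * ((-1 : ℚ)^j * (-1 : ℚ)^j) := by
            rw [← sq, ← pow_mul, mul_comm j 2, pow_mul, neg_one_sq, one_pow, mul_one]
        _ = (-1 : ℚ)^M * (-1 : ℚ)^j := by rw [← mul_assoc, ← pow_add, h6]
    rw [e1, e2, e3, e4, e5]
    ring
  rw [main, h]
  rcases Nat.eq_zero_or_pos M with hM | hM
  · simp [hM]
  · simp [Nat.pos_iff_ne_zero.mp hM]

lemma sum_swap' (F : ℕ → ℕ → ℚ) (m : ℕ) :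
    ∑ n ∈ range (m + 1), ∑ i ∈ range (n + 1), F n i
      = ∑ i ∈ range (m + 1), ∑ n ∈ Ico i (m + 1), F n i := by
  simp_rw [Finset.range_eq_Ico]
  exact (Finset.sum_Ico_Ico_comm 0 (m + 1) fun i n => F n i).symm

theorem first_kind_from_second_kind (m k : ℕ) (hk : 1 ≤ k) :
    Ch k m = ∑ n ∈ range (m + 1),
      (-1 : ℚ)^(m - n) * (m.choose n : ℚ) *
        (((m - n).factorial : ℚ) * ((k + m - n - 1).choose (m - n) : ℚ)) * Chh k n := by
  symm
  calc ∑ n ∈ range (m + 1),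
      (-1 : ℚ)^(m - n) * (m.choose n : ℚ) *
        (((m - n).factorial : ℚ) * ((k + m - n - 1).choose (m - n) : ℚ)) * Chh k n
      = ∑ n ∈ range (m + 1), ∑ i ∈ range (n + 1),
          (m.factorial : ℚ) * ((-1 : ℚ)^(m - n) * ((k + m - n - 1).choose (m - n) : ℚ)) *
            ((-1 : ℚ)^i / 2^i * ((k + i - 1).choose i : ℚ) * (k.choose (n - i) : ℚ)) := by
        refine Finset.sum_congr rfl fun n hn => ?_
        rw [Finset.mem_range] at hn
        have hnm : n ≤ m := by omega
        rw [Chh, Finset.mul_sum, Finset.mul_sum]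
        refine Finset.sum_congr rfl fun i hi => ?_
        have hfac : (m.choose n : ℚ) * (n.factorial : ℚ) * ((m - n).factorial : ℚ)
            = (m.factorial : ℚ) := by
          exact_mod_cast congrArg (Nat.cast (R := ℚ))
            (Nat.choose_mul_factorial_mul_factorial hnm)
        linear_combination ((-1 : ℚ)^(m - n) * ((k + m - n - 1).choose (m - n) : ℚ) *
          ((-1 : ℚ)^i / 2^i * ((k + i - 1).choose i : ℚ) * (k.choose (n - i) : ℚ))) * hfac
    _ = ∑ i ∈ range (m + 1), ∑ n ∈ Ico i (m + 1),
          (m.factorial : ℚ) * ((-1 : ℚ)^(m - n) * ((k + m - n - 1).choose (m - n) : ℚ)) *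
            ((-1 : ℚ)^i / 2^i * ((k + i - 1).choose i : ℚ) * (k.choose (n - i) : ℚ)) :=
        sum_swap' _ m
    _ = ∑ i ∈ range (m + 1),
          (m.factorial : ℚ) * ((-1 : ℚ)^i / 2^i * ((k + i - 1).choose i : ℚ)) *
            (if m - i = 0 then (1 : ℚ) else 0) := by
        refine Finset.sum_congr rfl fun i hi => ?_
        rw [Finset.mem_range] at hi
        have him : i ≤ m := by omega
        rw [Finset.sum_Ico_eq_sum_range]
        have hMi : m + 1 - i = (m - i) + 1 := by omega
        rw [hMi, ← key2 k hk (m - i), Finset.mul_sum]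
        refine Finset.sum_congr rfl fun j hj => ?_
        rw [Finset.mem_range] at hj
        have e1 : m - (i + j) = m - i - j := by omega
        have e2 : k + m - (i + j) - 1 = k + (m - i - j) - 1 := by omega
        have e3 : i + j - i = j := by omega
        rw [e1, e2, e3]
        ring
    _ = Ch k m := by
        rw [Finset.sum_eq_single m]
        · simp only [Nat.sub_self, if_pos rfl, mul_one, Ch, reduceIte]
          ring
        · intro i hi hne
          rw [Finset.mem_range] at hi
          have : m - i ≠ 0 := by omega
          simp [this]
        · intro h
          exact absurd (Finset.mem_range.mpr (by omega)) h
end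

section
/- For all natural numbers m, Ch_m = ∑_{n=0}^{m} (-1)^{m-n} · (m!/n!) · Ĉh_n, where Ch_m and Ĉh_n are the first- and second-kind Changhee numbers of order 1. -/
open Finset

/-- Changhee numbers of the first kind (order 1). -/
def Ch1 (n : ℕ) : ℚ := (-1)^n * n.factorial / 2^n

/-- Changhee numbers of the second kind (order 1). -/
def Chh1 (n : ℕ) : ℚ :=
  (n.factorial : ℚ) * ∑ i ∈ range (n + 1), ((-1 : ℚ))^i / 2^i * (Nat.choose 1 (n - i))

/-!
In exponential generating functions the second-kind numbers are `(1 + t)` times the first-kind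
ones, i.e. `Ĉh (n+1) = Ch (n+1) + (n+1) Ch n`. The theorem is the inversion of this relation,
which amounts to expanding `1 / (1 + t)`.
-/

section AlternatingFactorialSum

variable {K : Type*} [Field K] [CharZero K]

theorem alternating_factorial_sum_succ (b : ℕ → K) (m : ℕ) :
    ∑ n ∈ range (m + 2), (-1 : K)^(m + 1 - n) * ((m + 1).factorial : K) / n.factorial * b n =
      b (m + 1) - (m + 1) *
        ∑ n ∈ range (m + 1), (-1 : K)^(m - n) * (m.factorial : K) / n.factorial * b n := by
  rw [sum_range_succ, Nat.sub_self, pow_zero, one_mul,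
    div_self (Nat.cast_ne_zero.mpr (Nat.factorial_ne_zero _)), one_mul, mul_sum, sub_eq_add_neg, ← sum_neg_distrib, add_comm]
  congr 1
  refine sum_congr rfl fun n hn => ?_
  rw [Nat.sub_add_comm (Nat.lt_succ_iff.mp (mem_range.mp hn)), pow_succ, Nat.factorial_succ]
  push_cast
  ring

theorem eq_alternating_factorial_sum_of_succ (a b : ℕ → K) (h0 : a 0 = b 0)
    (hsucc : ∀ n : ℕ, b (n + 1) = a (n + 1) + (n + 1) * a n) (m : ℕ) :
    a m = ∑ n ∈ range (m + 1), (-1 : K)^(m - n) * (m.factorial : K) / n.factorial * b n := by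
  induction m with
  | zero => simp [h0]
  | succ m ih =>
    rw [alternating_factorial_sum_succ, ← ih, hsucc]
    ring

end AlternatingFactorialSum

theorem Chh1_zero : Chh1 0 = Ch1 0 := by
  simp [Ch1, Chh1]

theorem Chh1_succ (n : ℕ) : Chh1 (n + 1) = (-1)^n * ((n + 1).factorial : ℚ) / 2^(n + 1) := by
  have h_vanish : ∑ i ∈ range n, (-1 : ℚ)^i / 2^i * (Nat.choose 1 (n + 1 - i)) = 0 :=
    sum_eq_zero fun i hi => by
      rw [Nat.choose_eq_zero_of_lt (by have := mem_range.mp hi; omega)]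
      simp
  rw [Chh1, sum_range_succ, sum_range_succ, h_vanish]
  simp only [add_tsub_cancel_left, tsub_self, Nat.choose_self, Nat.choose_succ_self_right,
    Nat.cast_one, mul_one, zero_add]
  ring

theorem Chh1_succ_eq_Ch1_add (n : ℕ) : Chh1 (n + 1) = Ch1 (n + 1) + (n + 1) * Ch1 n := by
  rw [Chh1_succ, Ch1, Ch1, Nat.factorial_succ]
  push_cast
  field_simp
  ring

theorem first_from_second_order_one (m : ℕ) :
    Ch1 m = ∑ n ∈ range (m + 1), (-1 : ℚ)^(m - n) * (m.factorial : ℚ) / (n.factorial : ℚ) * Chh1 n :=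
  eq_alternating_factorial_sum_of_succ Ch1 Chh1 Chh1_zero.symm Chh1_succ_eq_Ch1_add m
end

section
/- For all natural numbers n and positive integers k, Ch_n^{(k)} = ∑_{ℓ=0}^{n} s₁(n,ℓ) · E_ℓ^{(k)}, where s₁ are the signed Stirling numbers of the first kind and E_ℓ^{(k)} are the order-k Euler numbers. -/
/-!
Writing `E k l = ∑ j, c j * S2 l j` with `c j = (-1/2)^j * C(k+j-1, j) * j!`, the right-hand side
becomes `∑ j, c j * ∑ l, s1 n l * S2 l j`. The two Stirling matrices are mutually inverse, so only
`c n` survives, and `c n` is `Ch k n`.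
-/

open Finset

/-- Signed Stirling numbers of the first kind. -/
def s1 : ℕ → ℕ → ℚ
  | 0, 0 => 1
  | 0, _ + 1 => 0
  | n + 1, 0 => -(n : ℚ) * s1 n 0
  | n + 1, l + 1 => s1 n l - (n : ℚ) * s1 n (l + 1)

/-- Stirling numbers of the second kind. -/
def S2 : ℕ → ℕ → ℚ
  | 0, 0 => 1
  | 0, _ + 1 => 0
  | _ + 1, 0 => 0
  | n + 1, l + 1 => S2 n l + ((l : ℚ) + 1) * S2 n (l + 1)

/-- Order-k Euler numbers. -/
def E (k l : ℕ) : ℚ :=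
  ∑ j ∈ range (l + 1), (-1/2 : ℚ)^j * ((k + j - 1).choose j) * (j.factorial : ℚ) * S2 l j

theorem s1_eq_zero_of_lt : ∀ {n l : ℕ}, n < l → s1 n l = 0
  | 0, _ + 1, _ => rfl
  | n + 1, l + 1, h => by
    rw [s1, s1_eq_zero_of_lt (by omega), s1_eq_zero_of_lt (by omega), mul_zero, sub_zero]

theorem S2_eq_zero_of_lt : ∀ {n l : ℕ}, n < l → S2 n l = 0
  | 0, _ + 1, _ => rfl
  | n + 1, l + 1, h => by
    rw [S2, S2_eq_zero_of_lt (by omega), S2_eq_zero_of_lt (by omega), mul_zero, add_zero]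

/-- `(x)_{n+1} = (x)_n (x - n)`, read on coefficients. -/
theorem sum_s1_succ_mul (n : ℕ) (f : ℕ → ℚ) :
    ∑ l ∈ range (n + 2), s1 (n + 1) l * f l =
      ∑ l ∈ range (n + 1), s1 n l * f (l + 1) - n * ∑ l ∈ range (n + 1), s1 n l * f l := by
  have shifted : ∑ l ∈ range (n + 1), s1 n (l + 1) * f (l + 1) + s1 n 0 * f 0 =
      ∑ l ∈ range (n + 1), s1 n l * f l := by
    rw [← sum_range_succ' (fun l ↦ s1 n l * f l), sum_range_succ,
      s1_eq_zero_of_lt n.lt_succ_self, zero_mul, add_zero]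
  rw [sum_range_succ', ← shifted]
  simp only [s1, sub_mul, sum_sub_distrib, mul_assoc, ← mul_sum]
  ring

theorem sum_s1_mul_S2 (n j : ℕ) :
    ∑ l ∈ range (n + 1), s1 n l * S2 l j = if j = n then 1 else 0 := by
  induction n generalizing j with
  | zero => cases j <;> simp [s1, S2]
  | succ n ih =>
    rw [sum_s1_succ_mul, ih]
    cases j with
    | zero => simp [S2, eq_comm]
    | succ m =>
      simp only [S2, mul_add, sum_add_distrib, mul_left_comm _ ((m : ℚ) + 1), ← mul_sum, ih]
      split_ifs <;> subst_vars <;> first | omega | (push_cast; ring)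

theorem sum_s1_mul_sum_mul_S2 (n : ℕ) (c : ℕ → ℚ) :
    ∑ l ∈ range (n + 1), s1 n l * ∑ j ∈ range (l + 1), c j * S2 l j = c n := by
  have extend (l : ℕ) (hl : l ∈ range (n + 1)) :
      ∑ j ∈ range (l + 1), c j * S2 l j = ∑ j ∈ range (n + 1), c j * S2 l j := by
    refine sum_subset (range_subset_range.2 (by simpa using hl)) fun j _ hj ↦ ?_
    rw [S2_eq_zero_of_lt (by simpa using hj), mul_zero]
  rw [sum_congr rfl fun l hl ↦ by rw [extend l hl, mul_sum], sum_comm]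
  simp_rw [mul_left_comm (s1 n _), ← mul_sum, sum_s1_mul_S2, mul_ite, mul_one, mul_zero]
  simp

theorem changhee_eq_stirling_euler_general (n k : ℕ) :
    Ch k n = ∑ l ∈ range (n + 1), s1 n l * E k l := by
  unfold E
  rw [sum_s1_mul_sum_mul_S2 n fun j ↦ (-1/2 : ℚ) ^ j * (k + j - 1).choose j * j.factorial, Ch,
    div_pow, neg_pow]
  ring

theorem changhee_eq_stirling_euler (n k : ℕ) (hk : 1 ≤ k) :
    Ch k n = ∑ l ∈ range (n + 1), s1 n l * E k l :=
  changhee_eq_stirling_euler_general n k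
end

section
/- For every natural number n ≥ 1 and all integers k ≥ 1, the identity (-1)^n/n! · Ĉh_n^{(k)}(x) = ∑_{m=1}^{n} (C(n-1, n-m)/m!) · Ch_m^{(k)}(-x) holds as an identity of polynomials in x over ℚ. -/
open Finset Polynomial

/-- The binomial coefficient polynomial C(x, j) = x(x-1)⋯(x-j+1)/j!. -/
noncomputable def binPoly (j : ℕ) : Polynomial ℚ :=
  (j.factorial : ℚ)⁻¹ • descPochhammer ℚ j

/-- Order-k Changhee polynomials of the first kind. -/
noncomputable def ChP (k m : ℕ) : Polynomial ℚ :=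
  ∑ i ∈ range (m + 1),
    Polynomial.C ((-1)^i * (m.factorial : ℚ) / 2^i * ((k + i - 1).choose i)) * binPoly (m - i)

/-- Order-k Changhee polynomials of the second kind. -/
noncomputable def ChhP (k n : ℕ) : Polynomial ℚ :=
  ∑ i ∈ range (n + 1),
    Polynomial.C ((-1)^i * (n.factorial : ℚ) / 2^i * ((k + i - 1).choose i)) *
      (binPoly (n - i)).comp (Polynomial.X + Polynomial.C (k : ℚ))

lemma binPoly_zero : binPoly 0 = 1 := by simp [binPoly]

lemma desc_comp_add_one (r : ℕ) :
    (descPochhammer ℚ (r+1)).comp (X + 1) =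
      descPochhammer ℚ (r+1) + Polynomial.C ((r:ℚ)+1) * descPochhammer ℚ r := by
  have h1 : ((X : ℚ[X]) - 1).comp (X + 1) = X := by
    simp [sub_comp]
  conv_lhs => rw [descPochhammer_succ_left, mul_comp, X_comp, comp_assoc, h1, comp_X]
  rw [descPochhammer_succ_right]
  simp only [map_add, map_one, C_eq_natCast]
  ring

lemma binPoly_comp_add_one (r : ℕ) :
    (binPoly (r+1)).comp (X + 1) = binPoly (r+1) + binPoly r := by
  unfold binPoly
  rw [smul_comp, desc_comp_add_one, smul_add]
  congr 1
  rw [← smul_eq_C_mul, smul_smul]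
  congr 1
  have h0 : (r:ℚ) + 1 ≠ 0 := by positivity
  have h2 : (r.factorial : ℚ) ≠ 0 := by exact_mod_cast r.factorial_ne_zero
  rw [Nat.factorial_succ]
  push_cast
  field_simp

lemma desc_comp_neg (N : ℕ) :
    (descPochhammer ℚ N).comp (-X) =
      (-1:ℚ)^N • (descPochhammer ℚ N).comp (X + Polynomial.C ((N:ℚ)-1)) := by
  induction N with
  | zero => simp
  | succ N ih =>
    have hL : (descPochhammer ℚ (N+1)).comp (-X)
        = (descPochhammer ℚ N).comp (-X) * (-(X + (N:ℚ[X]))) := by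
      rw [descPochhammer_succ_right, mul_comp, sub_comp, X_comp, natCast_comp]
      ring
    have hR : (descPochhammer ℚ (N+1)).comp (X + Polynomial.C ((N:ℚ)+1-1))
        = (X + (N:ℚ[X])) * (descPochhammer ℚ N).comp (X + Polynomial.C ((N:ℚ)-1)) := by
      rw [descPochhammer_succ_left, mul_comp, X_comp, comp_assoc]
      congr 2
      · simp [C_eq_natCast]
      · rw [sub_comp, X_comp, one_comp]
        simp only [map_sub, map_add, map_one]
        ring_nf
    push_cast
    rw [hL, hR, ih]
    rw [smul_mul_assoc, pow_succ]
    rw [mul_smul]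
    congr 1
    rw [neg_one_smul]
    ring

lemma binPoly_comp_neg (N : ℕ) :
    (binPoly N).comp (-X) = (-1:ℚ)^N • (binPoly N).comp (X + Polynomial.C ((N:ℚ)-1)) := by
  unfold binPoly
  rw [smul_comp, desc_comp_neg, smul_comp, smul_comm]

lemma binPoly_shift (N a : ℕ) :
    (binPoly N).comp (X + Polynomial.C (a:ℚ)) =
      ∑ r ∈ range (N+1), ((a.choose (N-r) : ℚ)) • binPoly r := by
  induction a with
  | zero =>
    simp only [Nat.cast_zero, map_zero, add_zero, comp_X]
    rw [Finset.sum_range_succ]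
    have : ∀ r ∈ range N, ((Nat.choose 0 (N-r) : ℚ)) • binPoly r = 0 := by
      intro r hr
      have hrN := mem_range.mp hr
      rw [Nat.choose_eq_zero_of_lt (by omega), Nat.cast_zero, zero_smul]
    rw [Finset.sum_eq_zero this]
    simp
  | succ a ih =>
    have hcomp : (X + Polynomial.C ((a:ℚ)+1)) = (X + Polynomial.C (a:ℚ)).comp (X + 1) := by
      rw [add_comp, X_comp, C_comp, map_add, map_one]; ring
    push_cast
    rw [hcomp, ← comp_assoc, ih, Polynomial.sum_comp]
    have step : ∑ r ∈ range (N+1), (((a.choose (N-r) : ℚ)) • binPoly r).comp (X+1)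
        = (∑ r ∈ range (N+1), ((a.choose (N-r) : ℚ)) • binPoly r)
          + ∑ r ∈ range N, ((a.choose (N-1-r) : ℚ)) • binPoly r := by
      rw [Finset.sum_range_succ' (fun r => (((a.choose (N-r) : ℚ)) • binPoly r).comp (X+1))]
      simp only [smul_comp, binPoly_comp_add_one, Nat.sub_zero]
      rw [Finset.sum_range_succ' (fun r => ((a.choose (N-r) : ℚ)) • binPoly r)]
      have h0 : ((binPoly 0).comp (X+1)) = binPoly 0 := by rw [binPoly_zero]; simp
      rw [h0]
      rw [Finset.sum_congr rfl (fun r _ => smul_add ((a.choose (N-(r+1)) : ℚ)) (binPoly (r+1)) (binPoly r))]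
      rw [Finset.sum_add_distrib]
      have : ∀ r ∈ range N, ((a.choose (N-(r+1)) : ℚ)) • binPoly r = ((a.choose (N-1-r) : ℚ)) • binPoly r := by
        intro r hr
        have h : N - (r+1) = N - 1 - r := by omega
        rw [h]
      rw [Finset.sum_congr rfl this]
      abel
    rw [step]
    rw [Finset.sum_range_succ, Finset.sum_range_succ]
    simp only [Nat.sub_self, Nat.choose_zero_right, Nat.cast_one, one_smul]
    rw [add_right_comm, ← Finset.sum_add_distrib]
    congr 1
    apply Finset.sum_congr rfl
    intro r hr
    rw [← add_smul]
    congr 1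
    have hrN := mem_range.mp hr
    have h1 : N - r = (N - 1 - r) + 1 := by omega
    rw [h1, Nat.choose_succ_succ']
    push_cast; ring

lemma binPoly_eval_nat (r m : ℕ) : (binPoly r).eval (m:ℚ) = (m.choose r : ℚ) := by
  unfold binPoly
  rw [eval_smul, descPochhammer_eval_eq_descFactorial, Nat.descFactorial_eq_factorial_mul_choose]
  have h2 : (r.factorial : ℚ) ≠ 0 := by exact_mod_cast r.factorial_ne_zero
  push_cast
  field_simp
  rw [smul_eq_mul, one_div, inv_mul_cancel_left₀ h2]

lemma binPoly_eval_zero (r : ℕ) : (binPoly r).eval 0 = if r = 0 then 1 else 0 := by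
  unfold binPoly
  rw [eval_smul, descPochhammer_eval_zero]
  rcases Nat.eq_zero_or_pos r with h | h
  · simp [h]
  · simp [Nat.pos_iff_ne_zero.mp h]

lemma binPoly_eval_neg (r y : ℕ) (hy : 1 ≤ y) :
    (binPoly r).eval (-(y:ℚ)) = (-1:ℚ)^r * ((y + r - 1).choose r : ℚ) := by
  have h := congrArg (fun p => Polynomial.eval (y:ℚ) p) (binPoly_comp_neg r)
  simp only [eval_comp, eval_neg, eval_X, eval_smul, eval_add, eval_C, smul_eq_mul] at h
  rw [h]
  have hc : (y:ℚ) + ((r:ℚ) - 1) = ((y + r - 1 : ℕ) : ℚ) := by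
    have : y + r - 1 = y + r - 1 := rfl
    push_cast [Nat.cast_sub (by omega : 1 ≤ y + r)]
    ring
  rw [hc, binPoly_eval_nat]

lemma const_of_comp (D : Polynomial ℚ) (h : D.comp (X+1) = D) : D = Polynomial.C (D.eval 0) := by
  have he : ∀ x : ℚ, D.eval (x+1) = D.eval x := by
    intro x
    conv_rhs => rw [← h]
    rw [eval_comp]; simp
  have hm : ∀ m : ℕ, D.eval (m:ℚ) = D.eval 0 := by
    intro m
    induction m with
    | zero => simp
    | succ m ih => push_cast; rw [he]; exact_mod_cast ih
  have hroot : ∀ m : ℕ, (D - Polynomial.C (D.eval 0)).IsRoot (m:ℚ) := by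
    intro m
    simp [IsRoot, hm m]
  have hinf : Set.Infinite {x : ℚ | (D - Polynomial.C (D.eval 0)).IsRoot x} := by
    exact Set.Infinite.mono (by rintro x ⟨m, rfl⟩; exact hroot m)
      (Set.infinite_range_of_injective (Nat.cast_injective : Function.Injective ((↑) : ℕ → ℚ)))
  have := Polynomial.eq_zero_of_infinite_isRoot _ hinf
  linear_combination (norm := ring_nf) this

noncomputable def Lc (k n : ℕ) : Polynomial ℚ :=
  ∑ i ∈ range (n+1), Polynomial.C ((-1/2:ℚ)^i * ((k+i-1).choose i : ℚ))
    * (binPoly (n-i)).comp (X + Polynomial.C (k:ℚ))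

noncomputable def Rc (k n : ℕ) : Polynomial ℚ :=
  ∑ j ∈ range (n+1), Polynomial.C ((1/2:ℚ)^j * ((k+j-1).choose j : ℚ))
    * (binPoly (n-j)).comp (X - Polynomial.C (j:ℚ))

lemma comp_swap (p : Polynomial ℚ) (c : ℚ) :
    (p.comp (X + Polynomial.C c)).comp (X+1) = (p.comp (X+1)).comp (X + Polynomial.C c) := by
  rw [comp_assoc, comp_assoc]
  congr 1
  simp only [add_comp, X_comp, C_comp, one_comp]
  ring

lemma comp_swap' (p : Polynomial ℚ) (c : ℚ) :
    (p.comp (X - Polynomial.C c)).comp (X+1) = (p.comp (X+1)).comp (X - Polynomial.C c) := by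
  have := comp_swap p (-c)
  simpa [sub_eq_add_neg, map_neg] using this

lemma Lc_comp (k n : ℕ) : (Lc k (n+1)).comp (X+1) = Lc k (n+1) + Lc k n := by
  unfold Lc
  rw [Polynomial.sum_comp, Finset.sum_range_succ]
  have hlast : (Polynomial.C ((-1/2:ℚ)^(n+1) * ((k+(n+1)-1).choose (n+1) : ℚ))
      * (binPoly (n+1-(n+1))).comp (X + Polynomial.C (k:ℚ))).comp (X+1)
      = Polynomial.C ((-1/2:ℚ)^(n+1) * ((k+(n+1)-1).choose (n+1) : ℚ))
      * (binPoly (n+1-(n+1))).comp (X + Polynomial.C (k:ℚ)) := by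
    simp [binPoly_zero]
  rw [hlast]
  have hmain : ∀ i ∈ range (n+1),
      (Polynomial.C ((-1/2:ℚ)^i * ((k+i-1).choose i : ℚ))
        * (binPoly (n+1-i)).comp (X + Polynomial.C (k:ℚ))).comp (X+1)
      = Polynomial.C ((-1/2:ℚ)^i * ((k+i-1).choose i : ℚ))
          * (binPoly (n+1-i)).comp (X + Polynomial.C (k:ℚ))
        + Polynomial.C ((-1/2:ℚ)^i * ((k+i-1).choose i : ℚ))
          * (binPoly (n-i)).comp (X + Polynomial.C (k:ℚ)) := by
    intro i hi
    have hin : i ≤ n := Nat.lt_succ_iff.mp (mem_range.mp hi)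
    have h1 : n + 1 - i = (n - i) + 1 := by omega
    rw [mul_comp, C_comp, comp_swap, h1, binPoly_comp_add_one, add_comp, mul_add]
  rw [Finset.sum_congr rfl hmain, Finset.sum_add_distrib]
  conv_rhs => rw [Finset.sum_range_succ]
  abel

lemma Rc_comp (k n : ℕ) : (Rc k (n+1)).comp (X+1) = Rc k (n+1) + Rc k n := by
  unfold Rc
  rw [Polynomial.sum_comp, Finset.sum_range_succ]
  have hlast : (Polynomial.C ((1/2:ℚ)^(n+1) * ((k+(n+1)-1).choose (n+1) : ℚ))
      * (binPoly (n+1-(n+1))).comp (X - Polynomial.C ((n+1:ℕ):ℚ))).comp (X+1)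
      = Polynomial.C ((1/2:ℚ)^(n+1) * ((k+(n+1)-1).choose (n+1) : ℚ))
      * (binPoly (n+1-(n+1))).comp (X - Polynomial.C ((n+1:ℕ):ℚ)) := by
    simp [binPoly_zero]
  rw [hlast]
  have hmain : ∀ j ∈ range (n+1),
      (Polynomial.C ((1/2:ℚ)^j * ((k+j-1).choose j : ℚ))
        * (binPoly (n+1-j)).comp (X - Polynomial.C ((j:ℕ):ℚ))).comp (X+1)
      = Polynomial.C ((1/2:ℚ)^j * ((k+j-1).choose j : ℚ))
          * (binPoly (n+1-j)).comp (X - Polynomial.C ((j:ℕ):ℚ))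
        + Polynomial.C ((1/2:ℚ)^j * ((k+j-1).choose j : ℚ))
          * (binPoly (n-j)).comp (X - Polynomial.C ((j:ℕ):ℚ)) := by
    intro j hj
    have hin : j ≤ n := Nat.lt_succ_iff.mp (mem_range.mp hj)
    have h1 : n + 1 - j = (n - j) + 1 := by omega
    rw [mul_comp, C_comp, comp_swap', h1, binPoly_comp_add_one, add_comp, mul_add]
  rw [Finset.sum_congr rfl hmain, Finset.sum_add_distrib]
  conv_rhs => rw [Finset.sum_range_succ]
  abel

lemma choose_prod (k n j : ℕ) (hk : 1 ≤ k) (hj : j ≤ n+1) :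
    ((k+j-1).choose j : ℚ) * ((k+n).choose (n+1-j) : ℚ)
      = ((k+n).choose (n+1) : ℚ) * ((n+1).choose j : ℚ) := by
  have h := Nat.choose_mul (n := k+n) (k := n+1) (s := n+1-j) (by omega)
  have h2 : k + n - (n+1-j) = k + j - 1 := by omega
  have h3 : (n+1) - (n+1-j) = j := by omega
  have h4 : (n+1).choose (n+1-j) = (n+1).choose j := by
    have := Nat.choose_symm (n := n+1) (k := j) hj
    simpa using this
  rw [h2, h3, h4] at h
  have h5 : (k+j-1).choose j * (k+n).choose (n+1-j) = (k+n).choose (n+1) * (n+1).choose j := by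
    rw [Nat.mul_comm]; exact h.symm
  exact_mod_cast h5

lemma key_sum (k n : ℕ) (hk : 1 ≤ k) :
    ∑ j ∈ range (n+2), (1/2:ℚ)^j * ((k+j-1).choose j : ℚ)
        * ((-1:ℚ)^(n+1-j) * ((k+n).choose (n+1-j) : ℚ))
      = (-1/2:ℚ)^(n+1) * ((k+n).choose (n+1) : ℚ) := by
  have hpt : ∀ j ∈ range (n+2),
      (1/2:ℚ)^j * ((k+j-1).choose j : ℚ) * ((-1:ℚ)^(n+1-j) * ((k+n).choose (n+1-j) : ℚ))
      = ((k+n).choose (n+1) : ℚ) * ((1/2:ℚ)^j * (-1:ℚ)^(n+1-j) * ((n+1).choose j : ℚ)) := by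
    intro j hj
    have hj' : j ≤ n+1 := Nat.lt_succ_iff.mp (mem_range.mp hj)
    have := choose_prod k n j hk hj'
    calc (1/2:ℚ)^j * ((k+j-1).choose j : ℚ) * ((-1:ℚ)^(n+1-j) * ((k+n).choose (n+1-j) : ℚ))
        = ((1/2:ℚ)^j * (-1:ℚ)^(n+1-j)) * (((k+j-1).choose j : ℚ) * ((k+n).choose (n+1-j) : ℚ)) := by ring
      _ = ((1/2:ℚ)^j * (-1:ℚ)^(n+1-j)) * (((k+n).choose (n+1) : ℚ) * ((n+1).choose j : ℚ)) := by rw [this]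
      _ = ((k+n).choose (n+1) : ℚ) * ((1/2:ℚ)^j * (-1:ℚ)^(n+1-j) * ((n+1).choose j : ℚ)) := by ring
  rw [Finset.sum_congr rfl hpt, ← Finset.mul_sum]
  have hbin := add_pow (1/2:ℚ) (-1) (n+1)
  have : ((1/2:ℚ) + (-1))^(n+1) = (-1/2:ℚ)^(n+1) := by norm_num
  rw [this] at hbin
  rw [show (n+2) = (n+1)+1 from rfl, ← hbin]
  ring

lemma Lc_eval (k n : ℕ) :
    (Lc k n).eval (-(k:ℚ)) = (-1/2:ℚ)^n * ((k+n-1).choose n : ℚ) := by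
  unfold Lc
  rw [eval_finset_sum]
  rw [Finset.sum_eq_single n]
  · simp [binPoly_zero]
  · intro i hi hne
    have hin : i ≤ n := Nat.lt_succ_iff.mp (mem_range.mp hi)
    rw [eval_mul, eval_C, eval_comp]
    simp only [eval_add, eval_X, eval_C, neg_add_cancel]
    rw [binPoly_eval_zero]
    have : ¬ (n - i = 0) := by omega
    simp [this]
  · intro h; exact absurd (self_mem_range_succ n) h

lemma Rc_eval (k n : ℕ) (hk : 1 ≤ k) :
    (Rc k (n+1)).eval (-(k:ℚ)) = (-1/2:ℚ)^(n+1) * ((k+n).choose (n+1) : ℚ) := by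
  unfold Rc
  rw [eval_finset_sum]
  have hpt : ∀ j ∈ range (n+2),
      (Polynomial.C ((1/2:ℚ)^j * ((k+j-1).choose j : ℚ))
        * (binPoly (n+1-j)).comp (X - Polynomial.C ((j:ℕ):ℚ))).eval (-(k:ℚ))
      = (1/2:ℚ)^j * ((k+j-1).choose j : ℚ)
          * ((-1:ℚ)^(n+1-j) * ((k+n).choose (n+1-j) : ℚ)) := by
    intro j hj
    have hj' : j ≤ n+1 := Nat.lt_succ_iff.mp (mem_range.mp hj)
    rw [eval_mul, eval_C, eval_comp]
    simp only [eval_sub, eval_X, eval_C]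
    have harg : -(k:ℚ) - (j:ℚ) = -(((k+j:ℕ)):ℚ) := by push_cast; ring
    rw [harg, binPoly_eval_neg (n+1-j) (k+j) (by omega)]
    have hidx : k + j + (n+1-j) - 1 = k + n := by omega
    rw [hidx]
  rw [Finset.sum_congr rfl hpt]
  exact key_sum k n hk

lemma core (k : ℕ) (hk : 1 ≤ k) : ∀ n, Lc k n = Rc k n := by
  intro n
  induction n with
  | zero =>
    unfold Lc Rc
    simp [binPoly_zero]
  | succ n ih =>
    have hD : (Lc k (n+1) - Rc k (n+1)).comp (X+1) = Lc k (n+1) - Rc k (n+1) := by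
      rw [sub_comp, Lc_comp, Rc_comp, ih]
      ring
    have hconst := const_of_comp _ hD
    have heval : (Lc k (n+1) - Rc k (n+1)).eval (-(k:ℚ)) = 0 := by
      rw [eval_sub, Rc_eval k n hk]
      rw [show (Lc k (n+1)).eval (-(k:ℚ)) = (-1/2:ℚ)^(n+1) * ((k+(n+1)-1).choose (n+1) : ℚ) from Lc_eval k (n+1)]
      have : k + (n+1) - 1 = k + n := by omega
      rw [this]; ring
    have h0 : (Lc k (n+1) - Rc k (n+1)).eval 0 = 0 := by
      have h := congrArg (Polynomial.eval (-(k:ℚ))) hconst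
      rw [heval, eval_C] at h
      exact h.symm
    have hz : Lc k (n+1) - Rc k (n+1) = 0 := by rw [hconst, h0, map_zero]
    exact sub_eq_zero.mp hz

lemma Vneg (N a : ℕ) :
    ∑ r ∈ range (N+1), ((a.choose (N-r) : ℚ)) • (binPoly r).comp (-X)
      = (binPoly N).comp (Polynomial.C (a:ℚ) - X) := by
  have h := congrArg (fun p => p.comp (-X)) (binPoly_shift N a)
  simp only [comp_assoc, Polynomial.sum_comp, smul_comp] at h
  rw [← h]
  congr 1
  simp only [add_comp, X_comp, C_comp]
  ring

lemma negneg (n j : ℕ) (hj : j ≤ n) (hn : 1 ≤ n) :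
    (binPoly (n-j)).comp (Polynomial.C (((n-1:ℕ)):ℚ) - X)
      = (-1:ℚ)^(n-j) • (binPoly (n-j)).comp (X - Polynomial.C ((j:ℕ):ℚ)) := by
  have h1 : (Polynomial.C (((n-1:ℕ)):ℚ) - X) = (-X).comp (X - Polynomial.C (((n-1:ℕ)):ℚ)) := by
    simp only [neg_comp, X_comp]
    ring
  rw [h1, ← comp_assoc, binPoly_comp_neg, smul_comp, comp_assoc]
  congr 2
  simp only [add_comp, X_comp, C_comp, sub_comp]
  have e1 : ((n-1:ℕ):ℚ) = (n:ℚ) - 1 := by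
    push_cast [Nat.cast_sub hn]; ring
  have e2 : ((n-j:ℕ):ℚ) = (n:ℚ) - (j:ℚ) := by
    push_cast [Nat.cast_sub hj]; ring
  rw [e1, e2]
  simp only [map_sub, map_one]
  ring

theorem second_poly_from_first_poly (n k : ℕ) (hn : 1 ≤ n) (hk : 1 ≤ k) :
    ((-1 : ℚ)^n / (n.factorial : ℚ)) • ChhP k n =
      ∑ m ∈ Icc 1 n,
        (((n - 1).choose (n - m) : ℚ) / (m.factorial : ℚ)) • (ChP k m).comp (-Polynomial.X) := by
  have hfac : ∀ m : ℕ, (m.factorial : ℚ) ≠ 0 := fun m => by exact_mod_cast m.factorial_ne_zero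
  -- LHS = (-1)^n • Lc k n
  have hL : ((-1 : ℚ)^n / (n.factorial : ℚ)) • ChhP k n = (-1:ℚ)^n • Lc k n := by
    unfold ChhP Lc
    rw [Finset.smul_sum, Finset.smul_sum]
    apply Finset.sum_congr rfl
    intro i _
    rw [smul_eq_C_mul, smul_eq_C_mul, ← mul_assoc, ← mul_assoc, ← map_mul, ← map_mul]
    congr 2
    field_simp
    rw [mul_comm ((2:ℚ)^i), mul_assoc, ← mul_pow]
    norm_num
    ring
  -- RHS = (-1)^n • Rc k n
  have hR : (∑ m ∈ Icc 1 n,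
        (((n - 1).choose (n - m) : ℚ) / (m.factorial : ℚ)) • (ChP k m).comp (-Polynomial.X))
      = (-1:ℚ)^n • Rc k n := by
    -- step A: expand ChP comp
    have hA : ∀ m ∈ Icc 1 n,
        (((n - 1).choose (n - m) : ℚ) / (m.factorial : ℚ)) • (ChP k m).comp (-Polynomial.X)
        = ∑ j ∈ range (m+1),
            Polynomial.C (((n-1).choose (n-m) : ℚ) * ((-1/2:ℚ)^j * ((k+j-1).choose j : ℚ)))
              * (binPoly (m-j)).comp (-X) := by
      intro m _
      unfold ChP
      rw [Polynomial.sum_comp, Finset.smul_sum]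
      apply Finset.sum_congr rfl
      intro j _
      rw [mul_comp, C_comp, smul_eq_C_mul, ← mul_assoc, ← map_mul]
      congr 2
      field_simp
      have h2 : (2:ℚ)^j * (-(1/2))^j = (-1)^j := by rw [← mul_pow]; norm_num
      linear_combination (-(((n - 1).choose (n - m) : ℕ) : ℚ) * (((k + j - 1).choose j : ℕ) : ℚ)) * h2
    rw [Finset.sum_congr rfl hA]
    -- step B: extend to range (n+1)
    have hins : range (n+1) = insert 0 (Icc 1 n) := by
      ext x; simp only [mem_range, mem_insert, mem_Icc]; omega
    have hzero : (∑ j ∈ range (0+1),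
        Polynomial.C (((n-1).choose (n-0) : ℚ) * ((-1/2:ℚ)^j * ((k+j-1).choose j : ℚ)))
          * (binPoly (0-j)).comp (-X)) = 0 := by
      simp only [range_one, sum_singleton, Nat.sub_zero]
      rw [Nat.choose_eq_zero_of_lt (by omega)]
      simp
    have hB : (∑ m ∈ Icc 1 n, ∑ j ∈ range (m+1),
        Polynomial.C (((n-1).choose (n-m) : ℚ) * ((-1/2:ℚ)^j * ((k+j-1).choose j : ℚ)))
          * (binPoly (m-j)).comp (-X))
        = ∑ m ∈ range (n+1), ∑ j ∈ range (m+1),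
        Polynomial.C (((n-1).choose (n-m) : ℚ) * ((-1/2:ℚ)^j * ((k+j-1).choose j : ℚ)))
          * (binPoly (m-j)).comp (-X) := by
      rw [hins, Finset.sum_insert (by simp), hzero, zero_add]
    rw [hB]
    -- step C: swap sums
    rw [Finset.sum_comm' (t' := range (n+1)) (s' := fun j => Icc j n)
      (by intro m j; simp only [mem_range, mem_Icc]; omega)]
    -- step D/E/F: evaluate inner sums
    unfold Rc
    rw [Finset.smul_sum]
    apply Finset.sum_congr rfl
    intro j hj
    have hjn : j ≤ n := Nat.lt_succ_iff.mp (mem_range.mp hj)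
    have hstep : (∑ m ∈ Icc j n,
        Polynomial.C (((n-1).choose (n-m) : ℚ) * ((-1/2:ℚ)^j * ((k+j-1).choose j : ℚ)))
          * (binPoly (m-j)).comp (-X))
        = Polynomial.C ((-1/2:ℚ)^j * ((k+j-1).choose j : ℚ)) *
            ∑ r ∈ range ((n-j)+1), (((n-1).choose ((n-j)-r) : ℚ)) • (binPoly r).comp (-X) := by
      rw [Finset.mul_sum]
      rw [← Finset.Ico_add_one_right_eq_Icc, Finset.sum_Ico_eq_sum_range]
      have hrange : n + 1 - j = (n-j) + 1 := by omega
      rw [hrange]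
      apply Finset.sum_congr rfl
      intro r hr
      have hrr : r ≤ n - j := Nat.lt_succ_iff.mp (mem_range.mp hr)
      have h1 : j + r - j = r := by omega
      have h2 : n - (j + r) = (n-j) - r := by omega
      rw [h1, h2, smul_eq_C_mul,
        ← mul_assoc (Polynomial.C ((-1/2:ℚ)^j * ((k+j-1).choose j : ℚ))), ← map_mul]
      congr 2
      ring
    rw [hstep, Vneg, negneg n j hjn hn]
    rw [smul_eq_C_mul, smul_eq_C_mul, ← mul_assoc, ← mul_assoc, ← map_mul, ← map_mul]
    congr 2
    have hsgn : (-1/2:ℚ)^j = (-1:ℚ)^j * (1/2:ℚ)^j := by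
      rw [← mul_pow]; norm_num
    have hpow : (-1:ℚ)^j * (-1:ℚ)^(n-j) = (-1:ℚ)^n := by
      rw [← pow_add]
      congr 1
      omega
    rw [← hpow]
    rw [hsgn]
    ring
  rw [hL, hR, core k hk n]
end
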